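/- Let (a, B_a) be a Lie superalgebra over char 2 with odd NIS B_a, D an even derivation with B_a(D(a),b) + B_a(a,D(b)) = 0 for all a,b. Then g := Kx ⊕ a ⊕ Ke (x odd, e even) with bracket [x,g] = 0, [a,b]_g := [a,b]_a + B_a(D(a),b)x, [a,e]_g := D(a), and squaring s_g(a + μx) := s_a(a), is a Lie superalgebra, and the form B_g extending B_a with B_g(x,e) = 1, B_g(x,x) = B_g(e,e) = 0, a ⊥ x, a ⊥ e, is an odd, non-degenerate, invariant, 0̄-antisymmetric form on g. -/

import Mathlib

/-!
All identities are componentwise computations in `K × V × K`. The only ones not inherited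
directly from `a` involve the `x`-component `B(Da, b)` of the bracket. Alternation needs
`B(Da, a) = 0`, which holds because `D` is even and `B` is odd. The `x`-component of the
Jacobi identity is the cyclic sum of `B(Da, [b, c])`; invariance and symmetry of `B`, together
with `D` being a derivation which in characteristic 2 is self-adjoint for `B`, turn it into
twice `B(a, [Db, c]) + B(a, [b, Dc])`.
-/

theorem add_self_eq_zero_of_charTwo (K : Type*) {V : Type*} [Field K] [CharP K 2]
    [AddCommGroup V] [Module K V] (v : V) : v + v = 0 := by
  rw [← two_smul K v, CharTwo.two_eq_zero, zero_smul]

theorem LinearMap.IsAlt.apply_comm_of_charTwo {K V W : Type*} [Field K] [CharP K 2]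
    [AddCommGroup V] [Module K V] [AddCommGroup W] [Module K W] {f : V →ₗ[K] V →ₗ[K] W}
    (hf : f.IsAlt) (x y : V) : f x y = f y x := by
  rw [← hf.neg x y, neg_eq_of_add_eq_zero_right (add_self_eq_zero_of_charTwo K _)]

namespace DExtension

variable {K V : Type*} [Field K] [AddCommGroup V] [Module K V]
  (br : V →ₗ[K] V →ₗ[K] V) (B : V →ₗ[K] V →ₗ[K] K) (D : V →ₗ[K] V)

def bracket (u v : K × V × K) : K × V × K :=
  (B (D u.2.1) v.2.1, br u.2.1 v.2.1 + u.2.2 • D v.2.1 + v.2.2 • D u.2.1, 0)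

def square (sq : V → V) (u : K × V × K) : K × V × K := (0, sq u.2.1, 0)

def form (u v : K × V × K) : K := B u.2.1 v.2.1 + u.1 * v.2.2 + u.2.2 * v.1

def evenPart (g0 : Submodule K V) : Set (K × V × K) := {u | u.1 = 0 ∧ u.2.1 ∈ g0}

def oddPart (g1 : Submodule K V) : Set (K × V × K) := {u | u.2.1 ∈ g1 ∧ u.2.2 = 0}

theorem apply_derivation_self_eq_zero [CharP K 2] {g0 g1 : Submodule K V}
    (hcompl : IsCompl g0 g1) (hBsym : ∀ x y, B x y = B y x)
    (hBodd00 : ∀ x ∈ g0, ∀ y ∈ g0, B x y = 0) (hBodd11 : ∀ x ∈ g1, ∀ y ∈ g1, B x y = 0)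
    (hD0 : ∀ x ∈ g0, D x ∈ g0) (hD1 : ∀ x ∈ g1, D x ∈ g1) (hDadj : B.IsAdjointPair B D D)
    (u : V) : B (D u) u = 0 := by
  obtain ⟨p, q, hp, hq, rfl⟩ := Submodule.codisjoint_iff_exists_add_eq.mp hcompl.codisjoint u
  have hpq : B (D p) q = B (D q) p := by rw [hDadj, hBsym]
  simp only [map_add, LinearMap.add_apply, hBodd00 _ (hD0 p hp) _ hp,
    hBodd11 _ (hD1 q hq) _ hq, hpq, zero_add, add_zero]
  exact CharTwo.add_self_eq_zero _

theorem cyclic_sum_apply_derivation_bracket [CharP K 2]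
    (hBinv : ∀ x y z, B (br x y) z = B x (br y z)) (hBsym : ∀ x y, B x y = B y x)
    (hDbr : ∀ x y, D (br x y) = br (D x) y + br x (D y)) (hDadj : B.IsAdjointPair B D D)
    (x y z : V) : B (D x) (br y z) + B (D y) (br z x) + B (D z) (br x y) = 0 := by
  have hy : B (D y) (br z x) = B x (br (D y) z) := by rw [← hBinv, hBsym]
  have hz : B (D z) (br x y) = B x (br y (D z)) := by rw [hBsym, hBinv]
  rw [hDadj, hDbr, map_add, hy, hz]
  linear_combination (B x (br (D y) z) + B x (br y (D z))) * (CharTwo.two_eq_zero : (2 : K) = 0)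

theorem bracket_self [CharP K 2] (halt : br.IsAlt) (hBD : ∀ x, B (D x) x = 0)
    (u : K × V × K) : bracket br B D u u = 0 := by
  simp [bracket, halt.self_eq_zero, hBD, add_self_eq_zero_of_charTwo K]

theorem bracket_jacobi [CharP K 2]
    (hjac : ∀ x y z, br x (br y z) + br y (br z x) + br z (br x y) = 0)
    (hcomm : ∀ x y, br x y = br y x)
    (hBinv : ∀ x y z, B (br x y) z = B x (br y z)) (hBsym : ∀ x y, B x y = B y x)
    (hDbr : ∀ x y, D (br x y) = br (D x) y + br x (D y)) (hDadj : B.IsAdjointPair B D D)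
    (u v w : K × V × K) :
    bracket br B D u (bracket br B D v w) + bracket br B D v (bracket br B D w u)
      + bracket br B D w (bracket br B D u v) = 0 := by
  obtain ⟨_, x, r⟩ := u
  obtain ⟨_, y, s⟩ := v
  obtain ⟨_, z, t⟩ := w
  simp only [bracket, Prod.mk_add_mk, zero_smul, add_zero, Prod.mk_eq_zero, and_true]
  constructor
  · simp only [map_add, map_smul, smul_eq_mul]
    linear_combination cyclic_sum_apply_derivation_bracket br B D hBinv hBsym hDbr hDadj x y z
      + t * hBsym (D x) (D y) + r * hBsym (D y) (D z) + s * hBsym (D z) (D x)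
      + (t * B (D y) (D x) + r * B (D z) (D y) + s * B (D x) (D z))
        * (CharTwo.two_eq_zero : (2 : K) = 0)
  · simp only [map_add, map_smul, hDbr, hcomm (D _)]
    -- after `hjac`, every remaining term occurs exactly twice
    linear_combination (norm := skip) hjac x y z
    match_scalars <;> ring_nf <;> simp [CharTwo.two_eq_zero]

theorem square_mem_evenPart {sq : V → V} {g0 g1 : Submodule K V} (hsqmem : ∀ x ∈ g1, sq x ∈ g0)
    {u : K × V × K} (hu : u ∈ oddPart g1) : square sq u ∈ evenPart g0 :=
  ⟨rfl, hsqmem _ hu.1⟩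

theorem square_smul {sq : V → V} {g1 : Submodule K V}
    (hsqsmul : ∀ (c : K), ∀ x ∈ g1, sq (c • x) = (c * c) • sq x)
    (c : K) {u : K × V × K} (hu : u ∈ oddPart g1) : square sq (c • u) = (c * c) • square sq u := by
  simp [square, hsqsmul c _ hu.1]

theorem square_add {sq : V → V} {g1 : Submodule K V}
    (hsqpol : ∀ x ∈ g1, ∀ y ∈ g1, sq (x + y) + sq x + sq y = br x y)
    (hBodd11 : ∀ x ∈ g1, ∀ y ∈ g1, B x y = 0) (hD1 : ∀ x ∈ g1, D x ∈ g1)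
    {u v : K × V × K} (hu : u ∈ oddPart g1) (hv : v ∈ oddPart g1) :
    square sq (u + v) + square sq u + square sq v = bracket br B D u v := by
  simp [square, bracket, hBodd11 _ (hD1 _ hu.1) _ hv.1, hu.2, hv.2, hsqpol _ hu.1 _ hv.1]

theorem bracket_square {sq : V → V} {g1 : Submodule K V}
    (hsqjac : ∀ x ∈ g1, ∀ y, br (sq x) y = br x (br x y))
    (hDsq : ∀ x ∈ g1, D (sq x) = br (D x) x) (hcomm : ∀ x y, br x y = br y x)
    (hBinv : ∀ x y z, B (br x y) z = B x (br y z))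
    (hBodd11 : ∀ x ∈ g1, ∀ y ∈ g1, B x y = 0) (hD1 : ∀ x ∈ g1, D x ∈ g1)
    {u : K × V × K} (hu : u ∈ oddPart g1) (v : K × V × K) :
    bracket br B D (square sq u) v = bracket br B D u (bracket br B D u v) := by
  obtain ⟨_, x, _⟩ := u
  obtain ⟨hx, rfl⟩ := hu
  have hDx : B (D x) (D x) = 0 := hBodd11 _ (hD1 x hx) _ (hD1 x hx)
  simp only [square, bracket, zero_smul, add_zero, map_add, map_smul, smul_eq_mul, hDx, mul_zero]
  rw [hDsq x hx, hBinv, hsqjac x hx, hcomm (D x) x]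

theorem eq_zero_of_forall_form_eq_zero (hBnd : B.SeparatingLeft) (u : K × V × K)
    (hu : ∀ v, form B u v = 0) : u = 0 := by
  obtain ⟨m, a, l⟩ := u
  have hm : m = 0 := by simpa [form] using hu (0, 0, 1)
  have hl : l = 0 := by simpa [form] using hu (1, 0, 0)
  have ha : a = 0 := hBnd a fun y => by simpa [form] using hu (0, y, 0)
  rw [hm, ha, hl]
  rfl

theorem form_bracket (hBinv : ∀ x y z, B (br x y) z = B x (br y z))
    (hDadj : B.IsAdjointPair B D D) (u v w : K × V × K) :
    form B (bracket br B D u v) w = form B u (bracket br B D v w) := by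
  simp only [form, bracket, map_add, map_smul, LinearMap.add_apply, LinearMap.smul_apply,
    smul_eq_mul]
  linear_combination hBinv u.2.1 v.2.1 w.2.1
    + v.2.2 * hDadj u.2.1 w.2.1 + w.2.2 * hDadj u.2.1 v.2.1

theorem form_comm (hBsym : ∀ x y, B x y = B y x) (u v : K × V × K) :
    form B u v = form B v u := by
  rw [form, form, hBsym]
  ring

theorem form_eq_zero_of_mem_evenPart {g0 : Submodule K V}
    (hBodd00 : ∀ x ∈ g0, ∀ y ∈ g0, B x y = 0) {u v : K × V × K}
    (hu : u ∈ evenPart g0) (hv : v ∈ evenPart g0) : form B u v = 0 := by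
  rw [form, hu.1, hv.1, hBodd00 _ hu.2 _ hv.2]
  ring

theorem form_eq_zero_of_mem_oddPart {g1 : Submodule K V}
    (hBodd11 : ∀ x ∈ g1, ∀ y ∈ g1, B x y = 0) {u v : K × V × K}
    (hu : u ∈ oddPart g1) (hv : v ∈ oddPart g1) : form B u v = 0 := by
  rw [form, hu.2, hv.2, hBodd11 _ hu.1 _ hv.1]
  ring

end DExtension

theorem stmt19_general {K V : Type*} [Field K] [CharP K 2]
    [AddCommGroup V] [Module K V]
    (g0 g1 : Submodule K V) (hcompl : IsCompl g0 g1)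
    (br : V →ₗ[K] V →ₗ[K] V) (sq : V → V)
    -- Lie superalgebra axioms on `a`
    (halt : ∀ u : V, br u u = 0)
    (hjac : ∀ u v w : V, br u (br v w) + br v (br w u) + br w (br u v) = 0)
    (hsqmem : ∀ x ∈ g1, sq x ∈ g0)
    (hsqsmul : ∀ (c : K), ∀ x ∈ g1, sq (c • x) = (c * c) • sq x)
    (hsqpol : ∀ x ∈ g1, ∀ y ∈ g1, sq (x + y) + sq x + sq y = br x y)
    (hsqjac : ∀ x ∈ g1, ∀ y : V, br (sq x) y = br x (br x y))
    -- odd NIS `B` on `a`: non-degenerate, invariant, symmetric (0̄-antisymmetric), odd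
    (B : V →ₗ[K] V →ₗ[K] K)
    (hBnd : ∀ x, (∀ y, B x y = 0) → x = 0)
    (hBinv : ∀ x y z, B (br x y) z = B x (br y z))
    (hBsym : ∀ x y, B x y = B y x)
    (hBodd00 : ∀ x ∈ g0, ∀ y ∈ g0, B x y = 0)
    (hBodd11 : ∀ x ∈ g1, ∀ y ∈ g1, B x y = 0)
    -- the even derivation `D`
    (D : V →ₗ[K] V)
    (hD0 : ∀ x ∈ g0, D x ∈ g0) (hD1 : ∀ x ∈ g1, D x ∈ g1)
    (hDbr : ∀ x y, D (br x y) = br (D x) y + br x (D y))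
    (hDsq : ∀ x ∈ g1, D (sq x) = br (D x) x)
    (hDskew : ∀ x y, B (D x) y + B x (D y) = 0)
    -- the extension data on `K × V × K` (`x = (1,0,0)` odd, `e = (0,0,1)` even)
    (brG : (K × V × K) → (K × V × K) → (K × V × K))
    (hbrG : ∀ u v, brG u v =
      (B (D u.2.1) v.2.1, br u.2.1 v.2.1 + u.2.2 • D v.2.1 + v.2.2 • D u.2.1, 0))
    (sG : (K × V × K) → (K × V × K))
    (hsG : ∀ u, sG u = (0, sq u.2.1, 0))
    (BG : (K × V × K) → (K × V × K) → K)
    (hBG : ∀ u v, BG u v = B u.2.1 v.2.1 + u.1 * v.2.2 + u.2.2 * v.1)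
    (G0 G1 : Set (K × V × K))
    (hG0 : G0 = {u | u.1 = 0 ∧ u.2.1 ∈ g0})
    (hG1 : G1 = {u | u.2.1 ∈ g1 ∧ u.2.2 = 0}) :
    -- `g` is a Lie superalgebra
    (∀ u, brG u u = 0) ∧
    (∀ u v w, brG u (brG v w) + brG v (brG w u) + brG w (brG u v) = 0) ∧
    (∀ u ∈ G1, sG u ∈ G0) ∧
    (∀ (c : K), ∀ u ∈ G1, sG (c • u) = (c * c) • sG u) ∧
    (∀ u ∈ G1, ∀ v ∈ G1, sG (u + v) + sG u + sG v = brG u v) ∧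
    (∀ u ∈ G1, ∀ v, brG (sG u) v = brG u (brG u v)) ∧
    -- `B_g` is odd, non-degenerate, invariant, 0̄-antisymmetric (i.e. symmetric)
    (∀ u, (∀ v, BG u v = 0) → u = 0) ∧
    (∀ u v w, BG (brG u v) w = BG u (brG v w)) ∧
    (∀ u v, BG u v = BG v u) ∧
    (∀ u ∈ G0, ∀ v ∈ G0, BG u v = 0) ∧
    (∀ u ∈ G1, ∀ v ∈ G1, BG u v = 0) := by
  subst hG0 hG1
  obtain rfl : brG = DExtension.bracket br B D := funext₂ hbrG
  obtain rfl : sG = DExtension.square sq := funext hsG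
  obtain rfl : BG = DExtension.form B := funext₂ hBG
  have hcomm : ∀ x y, br x y = br y x := LinearMap.IsAlt.apply_comm_of_charTwo halt
  have hDadj : B.IsAdjointPair B D D := fun x y => CharTwo.add_eq_zero.mp (hDskew x y)
  have hBD : ∀ x, B (D x) x = 0 :=
    DExtension.apply_derivation_self_eq_zero B D hcompl hBsym hBodd00 hBodd11 hD0 hD1 hDadj
  open DExtension in
  exact ⟨bracket_self br B D halt hBD,
    bracket_jacobi br B D hjac hcomm hBinv hBsym hDbr hDadj,
    fun _ => square_mem_evenPart hsqmem,
    fun c _ => square_smul hsqsmul c,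
    fun _ hu _ hv => square_add br B D hsqpol hBodd11 hD1 hu hv,
    fun _ hu v => bracket_square br B D hsqjac hDsq hcomm hBinv hBodd11 hD1 hu v,
    eq_zero_of_forall_form_eq_zero B hBnd,
    form_bracket br B D hBinv hDadj,
    form_comm B hBsym,
    fun _ hu _ hv => form_eq_zero_of_mem_evenPart B hBodd00 hu hv,
    fun _ hu _ hv => form_eq_zero_of_mem_oddPart B hBodd11 hu hv⟩

/-- the `D`-extension (`x` odd, `e` even) of a Lie superalgebra
`(a, B_a)` in characteristic 2 with an odd NIS `B_a` by an even derivation `D` with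
`B(Da,b) + B(a,Db) = 0` is again a Lie superalgebra `g = Kx ⊕ a ⊕ Ke`, and the
extended form `B_g` is odd, non-degenerate, invariant and 0̄-antisymmetric. The
space is modeled as `K × V × K` with `x = (1,0,0)` odd and `e = (0,0,1)` even. -/
theorem stmt19 {K V : Type*} [Field K] [CharP K 2]
    [AddCommGroup V] [Module K V]
    (g0 g1 : Submodule K V) (hcompl : IsCompl g0 g1)
    (br : V →ₗ[K] V →ₗ[K] V) (sq : V → V)
    -- Lie superalgebra axioms on `a`
    (halt : ∀ u : V, br u u = 0)
    (hjac : ∀ u v w : V, br u (br v w) + br v (br w u) + br w (br u v) = 0)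
    (hbr00 : ∀ x ∈ g0, ∀ y ∈ g0, br x y ∈ g0)
    (hbr01 : ∀ x ∈ g0, ∀ y ∈ g1, br x y ∈ g1)
    (hbr11 : ∀ x ∈ g1, ∀ y ∈ g1, br x y ∈ g0)
    (hsqmem : ∀ x ∈ g1, sq x ∈ g0)
    (hsqsmul : ∀ (c : K), ∀ x ∈ g1, sq (c • x) = (c * c) • sq x)
    (hsqpol : ∀ x ∈ g1, ∀ y ∈ g1, sq (x + y) + sq x + sq y = br x y)
    (hsqjac : ∀ x ∈ g1, ∀ y : V, br (sq x) y = br x (br x y))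
    -- odd NIS `B` on `a`: non-degenerate, invariant, symmetric (0̄-antisymmetric), odd
    (B : V →ₗ[K] V →ₗ[K] K)
    (hBnd : ∀ x, (∀ y, B x y = 0) → x = 0)
    (hBinv : ∀ x y z, B (br x y) z = B x (br y z))
    (hBsym : ∀ x y, B x y = B y x)
    (hBodd00 : ∀ x ∈ g0, ∀ y ∈ g0, B x y = 0)
    (hBodd11 : ∀ x ∈ g1, ∀ y ∈ g1, B x y = 0)
    -- the even derivation `D`
    (D : V →ₗ[K] V)
    (hD0 : ∀ x ∈ g0, D x ∈ g0) (hD1 : ∀ x ∈ g1, D x ∈ g1)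
    (hDbr : ∀ x y, D (br x y) = br (D x) y + br x (D y))
    (hDsq : ∀ x ∈ g1, D (sq x) = br (D x) x)
    (hDskew : ∀ x y, B (D x) y + B x (D y) = 0)
    -- the extension data on `K × V × K` (`x = (1,0,0)` odd, `e = (0,0,1)` even)
    (brG : (K × V × K) → (K × V × K) → (K × V × K))
    (hbrG : ∀ u v, brG u v =
      (B (D u.2.1) v.2.1, br u.2.1 v.2.1 + u.2.2 • D v.2.1 + v.2.2 • D u.2.1, 0))
    (sG : (K × V × K) → (K × V × K))
    (hsG : ∀ u, sG u = (0, sq u.2.1, 0))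
    (BG : (K × V × K) → (K × V × K) → K)
    (hBG : ∀ u v, BG u v = B u.2.1 v.2.1 + u.1 * v.2.2 + u.2.2 * v.1)
    (G0 G1 : Set (K × V × K))
    (hG0 : G0 = {u | u.1 = 0 ∧ u.2.1 ∈ g0})
    (hG1 : G1 = {u | u.2.1 ∈ g1 ∧ u.2.2 = 0}) :
    -- `g` is a Lie superalgebra
    (∀ u, brG u u = 0) ∧
    (∀ u v w, brG u (brG v w) + brG v (brG w u) + brG w (brG u v) = 0) ∧
    (∀ u ∈ G1, sG u ∈ G0) ∧
    (∀ (c : K), ∀ u ∈ G1, sG (c • u) = (c * c) • sG u) ∧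
    (∀ u ∈ G1, ∀ v ∈ G1, sG (u + v) + sG u + sG v = brG u v) ∧
    (∀ u ∈ G1, ∀ v, brG (sG u) v = brG u (brG u v)) ∧
    -- `B_g` is odd, non-degenerate, invariant, 0̄-antisymmetric (i.e. symmetric)
    (∀ u, (∀ v, BG u v = 0) → u = 0) ∧
    (∀ u v w, BG (brG u v) w = BG u (brG v w)) ∧
    (∀ u v, BG u v = BG v u) ∧
    (∀ u ∈ G0, ∀ v ∈ G0, BG u v = 0) ∧
    (∀ u ∈ G1, ∀ v ∈ G1, BG u v = 0) :=
  stmt19_general g0 g1 hcompl br sq halt hjac hsqmem hsqsmul hsqpol hsqjac B hBnd hBinv hBsym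
    hBodd00 hBodd11 D hD0 hD1 hDbr hDsq hDskew brG hbrG sG hsG BG hBG G0 G1 hG0 hG1
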